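/- arXiv:2206.15461 — 3 statements merged into one kernel-verified Lean document; each statement's English description precedes it below -/
import Mathlib

section
/- Let (W, S) be a finite Coxeter system with longest element ω∘, and let SC(Q, π) be a subword complex with Dem(Q) = π (i.e., a spherical subword complex). If Q' is the word obtained by appending to Q a reduced word P for π⁻¹ω∘, then the facets of SC(Q', ω∘) coincide with the facets of SC(Q, π); in particular SC(Q, π) ≅ SC(Q', ω∘). -/
/-- The word obtained from `Q` (with positions numbered `1, …, Q.length`) by deleting the
letters at the positions in `I`. -/
def subwordDel {B : Type*} (Q : List B) (I : Finset ℕ) : List B :=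
  ((Q.zipIdx 1).filter (fun p => p.2 ∉ I)).map Prod.fst

/-- `I ⊆ {1, …, Q.length}` is a facet of the subword complex `SC(Q, π)`:
the complementary subword is a reduced expression for `π`. -/
def IsSCFacet {B W : Type*} [Group W] {M : CoxeterMatrix B} (cs : CoxeterSystem M W)
    (Q : List B) (π : W) (I : Finset ℕ) : Prop :=
  I ⊆ Finset.Icc 1 Q.length ∧ cs.IsReduced (subwordDel Q I) ∧
    cs.wordProd (subwordDel Q I) = π

/-- The subword complex `SC(Q, π)`: all subsets of facets. -/
def subwordCpx {B W : Type*} [Group W] {M : CoxeterMatrix B} (cs : CoxeterSystem M W)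
    (Q : List B) (π : W) : Set (Finset ℕ) :=
  {J | ∃ I : Finset ℕ, IsSCFacet cs Q π I ∧ J ⊆ I}

/-- The costar of a face `I` of `SC(Q, π)`: the subcomplex generated by facets
not containing `I`. -/
def subwordCostar {B W : Type*} [Group W] {M : CoxeterMatrix B} (cs : CoxeterSystem M W)
    (Q : List B) (π : W) (I : Finset ℕ) : Set (Finset ℕ) :=
  {J | ∃ F : Finset ℕ, IsSCFacet cs Q π F ∧ J ⊆ F ∧ ¬ I ⊆ F}

/-- The Demazure product of a word. -/
noncomputable def Dem {B W : Type*} [Group W] {M : CoxeterMatrix B}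
    (cs : CoxeterSystem M W) (Q : List B) : W :=
  Q.foldl (fun μ i => if cs.length μ < cs.length (μ * cs.simple i) then μ * cs.simple i else μ) 1

/-- Bruhat order: `u ≤ w` iff `u` is the product of a subword of some reduced word for `w`. -/
def BruhatLE {B W : Type*} [Group W] {M : CoxeterMatrix B} (cs : CoxeterSystem M W)
    (u w : W) : Prop :=
  ∃ ω : List B, cs.IsReduced ω ∧ cs.wordProd ω = w ∧
    ∃ υ : List B, υ.Sublist ω ∧ cs.wordProd υ = u

/-!
A facet `I` of `SC(Q, π)` turns into a facet of `SC(Q ++ P, w₀)`: the word `(Q ∖ I) ++ P` has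
product `π · π⁻¹w₀ = w₀` and is reduced because `ℓ(u) + ℓ(u⁻¹w₀) = ℓ(w₀)` for every `u`.
Conversely, if `(Q ++ P) ∖ I` is a reduced word for `w₀`, its part inside `Q` has length at most
`ℓ(Dem Q) = ℓ(π)`, since every subword product of `Q` lies below `Dem Q` in Bruhat order; the
length count then forces `I` to avoid `P` and the part inside `Q` to be a reduced word for `π`.

Both facts about Coxeter groups come from Humphreys' reflection cocycle `η(w, t) ∈ ZMod 2`, the
parity of the number of occurrences of `t` in the left inversion sequence of any word for `w`.
It detects left inversions, which gives the strong exchange condition (and from it the lifting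
property of Bruhat order), and it satisfies `η(w₀, t) = η(u, t) + η(u⁻¹w₀, u⁻¹tu) = 1` for every
reflection `t`, so the inversion set of `u⁻¹w₀` is a conjugate of the complement of that of `u`.
-/

open scoped List

theorem count_map_conj {G : Type*} [Group G] [DecidableEq G] (g t : G) (l : List G) :
    (l.map (MulAut.conj g)).count t = l.count (g⁻¹ * t * g) := by
  conv_lhs => rw [show t = MulAut.conj g (g⁻¹ * t * g) by simp [mul_assoc]]
  exact List.count_map_of_injective _ _ (MulAut.conj g).injective _

namespace CoxeterSystem

/-- The semidirect product `W ⋉ (W → ZMod 2)`, `W` acting on functions by conjugating their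
argument. -/
@[ext]
structure ParityPair (W : Type*) where
  elt : W
  parity : W → ZMod 2

namespace ParityPair

variable {W : Type*} [Group W]

instance : Mul (ParityPair W) :=
  ⟨fun a b => ⟨a.elt * b.elt, fun t => a.parity t + b.parity (a.elt⁻¹ * t * a.elt)⟩⟩

instance : One (ParityPair W) := ⟨⟨1, 0⟩⟩

@[simp] theorem one_elt : (1 : ParityPair W).elt = 1 := rfl
@[simp] theorem one_parity (t : W) : (1 : ParityPair W).parity t = 0 := rfl
@[simp] theorem mul_elt (a b : ParityPair W) : (a * b).elt = a.elt * b.elt := rfl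
@[simp] theorem mul_parity (a b : ParityPair W) (t : W) :
    (a * b).parity t = a.parity t + b.parity (a.elt⁻¹ * t * a.elt) := rfl

instance : Monoid (ParityPair W) where
  mul_assoc a b c := by ext <;> simp [mul_assoc, add_assoc]
  one_mul a := by ext <;> simp
  mul_one a := by ext <;> simp

end ParityPair

variable {B W : Type*} [Group W] {M : CoxeterMatrix B} (cs : CoxeterSystem M W)

local prefix:100 "s " => cs.simple
local prefix:100 "π " => cs.wordProd
local prefix:100 "ℓ " => cs.length
local prefix:100 "lis " => cs.leftInvSeq

theorem prod_map_alternatingWord {G : Type*} [Monoid G] (f : B → G) (i j : B) (p : ℕ) :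
    ((alternatingWord i j (2 * p)).map f).prod = (f i * f j) ^ p := by
  induction p with
  | zero => simp [alternatingWord]
  | succ p ih =>
    rw [show 2 * (p + 1) = 2 * p + 1 + 1 by ring, alternatingWord_succ', alternatingWord_succ']
    simp [ih, pow_succ', mul_assoc]

theorem leftInvSeq_alternatingWord (i j : B) (p : ℕ) :
    lis (alternatingWord i j (2 * p)) =
      (List.range (2 * p)).map (fun k => s i * (s j * s i) ^ k) := by
  refine List.ext_getElem (by simp) fun k hk _ => ?_
  rw [getElem_leftInvSeq_alternatingWord cs i j p k (by simpa using hk),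
    prod_alternatingWord_eq_mul_pow]
  simp [Nat.not_even_bit1, Nat.mul_add_div]

section InversionParity

variable [DecidableEq W]

def parityGen (i : B) : ParityPair W := ⟨s i, fun t => if t = s i then 1 else 0⟩

theorem prod_map_parityGen (ω : List B) :
    (ω.map cs.parityGen).prod = ⟨π ω, fun t => ((lis ω).count t : ZMod 2)⟩ := by
  induction ω with
  | nil => ext <;> simp
  | cons i ω ih =>
    rw [List.map_cons, List.prod_cons, ih]
    ext t
    · simp [parityGen, wordProd_cons]
    · simp only [parityGen, ParityPair.mul_parity, leftInvSeq, List.count_cons, count_map_conj]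
      rw [add_comm]
      rcases eq_or_ne t (s i) with rfl | h
      · simp
      · simp [h, h.symm]

theorem even_count_leftInvSeq_alternatingWord (i j : B) (t : W) :
    Even ((lis (alternatingWord i j (2 * M i j))).count t) := by
  have hper : ∀ k, s i * (s j * s i) ^ (M i j + k) = s i * (s j * s i) ^ k := by
    simp [pow_add]
  rw [leftInvSeq_alternatingWord, two_mul, List.range_add, List.map_append, List.map_map]
  simp only [Function.comp_def, hper, List.count_append]
  exact Even.add_self _

theorem isLiftable_parityGen : M.IsLiftable cs.parityGen := fun i j => by
  rw [← prod_map_alternatingWord, prod_map_parityGen]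
  ext t
  · simp [prod_alternatingWord_eq_mul_pow]
  · exact ZMod.natCast_eq_zero_iff_even.mpr (cs.even_count_leftInvSeq_alternatingWord i j t)

def parityHom : W →* ParityPair W := cs.lift ⟨cs.parityGen, cs.isLiftable_parityGen⟩

theorem parityHom_wordProd (ω : List B) :
    cs.parityHom (π ω) = ⟨π ω, fun t => ((lis ω).count t : ZMod 2)⟩ := by
  rw [← prod_map_parityGen, wordProd, map_list_prod, List.map_map]
  congr 2
  funext i
  exact cs.lift_apply_simple cs.isLiftable_parityGen i

/-- Humphreys' reflection cocycle `η(w, t)`. -/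
def invParity (w t : W) : ZMod 2 := (cs.parityHom w).parity t

theorem invParity_wordProd (ω : List B) (t : W) :
    cs.invParity (π ω) t = (lis ω).count t := by
  simp [invParity, parityHom_wordProd]

theorem elt_parityHom (w : W) : (cs.parityHom w).elt = w := by
  obtain ⟨ω, rfl⟩ := cs.wordProd_surjective w
  simp [parityHom_wordProd]

theorem invParity_mul (u v t : W) :
    cs.invParity (u * v) t = cs.invParity u t + cs.invParity v (u⁻¹ * t * u) := by
  simp [invParity, elt_parityHom]

theorem invParity_one (t : W) : cs.invParity 1 t = 0 := by
  simp [invParity]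

theorem invParity_simple_self (i : B) : cs.invParity (s i) (s i) = 1 := by
  simpa [leftInvSeq] using cs.invParity_wordProd [i] (s i)

theorem invParity_self {t : W} (ht : cs.IsReflection t) : cs.invParity t t = 1 := by
  obtain ⟨u, i, rfl⟩ := ht
  -- Expanding `η(u s u⁻¹, t)` by the cocycle rule leaves `η(s, s) = 1` plus the two terms
  -- of `η(u u⁻¹, t) = 0`.
  have hexpand := cs.invParity_mul (u * s i) u⁻¹ (u * s i * u⁻¹)
  have hleft := cs.invParity_mul u (s i) (u * s i * u⁻¹)
  have hcancel := cs.invParity_mul u u⁻¹ (u * s i * u⁻¹)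
  have hconj : u⁻¹ * (u * s i * u⁻¹) * u = s i := by group
  have hconj' : (u * s i)⁻¹ * (u * s i * u⁻¹) * (u * s i) = s i := by group
  rw [hconj', hleft, hconj, invParity_simple_self] at hexpand
  rw [hconj, mul_inv_cancel, invParity_one] at hcancel
  linear_combination hexpand - hcancel

theorem mem_leftInvSeq_of_invParity_ne_zero {ω : List B} {t : W}
    (h : cs.invParity (π ω) t ≠ 0) : t ∈ lis ω := by
  rw [invParity_wordProd] at h
  exact List.count_pos_iff.mp (Nat.pos_of_ne_zero fun h0 => h (by simp [h0]))

theorem isLeftInversion_of_invParity_eq_one {w t : W} (h : cs.invParity w t = 1) :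
    cs.IsLeftInversion w t := by
  obtain ⟨ω, hω, rfl⟩ := cs.exists_isReduced w
  exact cs.isLeftInversion_of_mem_leftInvSeq hω
    (cs.mem_leftInvSeq_of_invParity_ne_zero (by simp [h]))

theorem invParity_eq_one_iff {w t : W} :
    cs.invParity w t = 1 ↔ cs.IsLeftInversion w t := by
  refine ⟨cs.isLeftInversion_of_invParity_eq_one, fun ⟨ht, hlt⟩ => ?_⟩
  have hsplit := cs.invParity_mul t (t * w) t
  rw [← mul_assoc, ht.mul_self, one_mul, invParity_self cs ht, inv_mul_cancel, one_mul]
    at hsplit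
  have hnot : cs.invParity (t * w) t ≠ 1 := fun h1 => by
    have := (cs.isLeftInversion_of_invParity_eq_one h1).2
    rw [← mul_assoc, ht.mul_self, one_mul] at this
    omega
  rw [hsplit]
  generalize cs.invParity (t * w) t = x at hnot
  revert x; decide

end InversionParity

theorem setOf_isLeftInversion_wordProd {ω : List B} (hω : cs.IsReduced ω) :
    {t | cs.IsLeftInversion (π ω) t} = {t | t ∈ lis ω} := by
  classical
  refine Set.ext fun t => ⟨fun h => cs.mem_leftInvSeq_of_invParity_ne_zero ?_,
    cs.isLeftInversion_of_mem_leftInvSeq hω⟩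
  rw [cs.invParity_eq_one_iff.mpr h]
  exact one_ne_zero

theorem ncard_setOf_isLeftInversion (w : W) : {t | cs.IsLeftInversion w t}.ncard = ℓ w := by
  classical
  obtain ⟨ω, hω, rfl⟩ := cs.exists_isReduced w
  rw [setOf_isLeftInversion_wordProd cs hω, ← List.coe_toFinset, Set.ncard_coe_finset,
    List.toFinset_card_of_nodup hω.nodup_leftInvSeq, length_leftInvSeq, hω]

theorem finite_setOf_isLeftInversion (w : W) : {t | cs.IsLeftInversion w t}.Finite := by
  classical
  obtain ⟨ω, hω, rfl⟩ := cs.exists_isReduced w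
  rw [setOf_isLeftInversion_wordProd cs hω, ← List.coe_toFinset]
  exact Finset.finite_toSet _

theorem isLeftInversion_inv_mul_iff {w t : W} (hw : cs.IsLeftInversion w t) (u : W) :
    cs.IsLeftInversion (u⁻¹ * w) (u⁻¹ * t * u) ↔ ¬ cs.IsLeftInversion u t := by
  classical
  have hsplit := cs.invParity_mul u (u⁻¹ * w) t
  rw [mul_inv_cancel_left, cs.invParity_eq_one_iff.mpr hw] at hsplit
  rw [← invParity_eq_one_iff, ← invParity_eq_one_iff]
  generalize cs.invParity u t = a at hsplit
  generalize cs.invParity (u⁻¹ * w) (u⁻¹ * t * u) = b at hsplit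
  revert a b; decide

theorem length_add_length_inv_mul {w₀ : W} (hw₀ : ∀ w, ℓ w ≤ ℓ w₀) (u : W) :
    ℓ u + ℓ (u⁻¹ * w₀) = ℓ w₀ := by
  have hw₀inv : {t | cs.IsLeftInversion w₀ t} = {t | cs.IsReflection t} :=
    Set.ext fun t => ⟨And.left, fun ht => ⟨ht, (hw₀ _).lt_of_ne (ht.length_mul_right_ne w₀)⟩⟩
  have hinv : {t | cs.IsLeftInversion (u⁻¹ * w₀) t} =
      MulAut.conj u⁻¹ '' ({t | cs.IsReflection t} \ {t | cs.IsLeftInversion u t}) := by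
    ext t
    simp only [Set.mem_image, Set.mem_sdiff, Set.mem_ofPred_eq, MulAut.conj_apply, inv_inv]
    refine ⟨fun h => ⟨u * t * u⁻¹, ?_, by group⟩, ?_⟩
    · have ht : cs.IsReflection (u * t * u⁻¹) := h.1.conj u
      refine ⟨ht, (cs.isLeftInversion_inv_mul_iff ((Set.ext_iff.mp hw₀inv _).mpr ht) u).mp ?_⟩
      simpa [mul_assoc] using h
    · rintro ⟨t, ⟨ht, hnot⟩, rfl⟩
      exact (cs.isLeftInversion_inv_mul_iff ((Set.ext_iff.mp hw₀inv _).mpr ht) u).mpr hnot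
  have hsub : {t | cs.IsLeftInversion u t} ⊆ {t | cs.IsReflection t} := fun _ => And.left
  have hcard := cs.ncard_setOf_isLeftInversion (u⁻¹ * w₀)
  rw [hinv, Set.ncard_image_of_injective _ (MulAut.conj _).injective,
    Set.ncard_sdiff hsub (cs.finite_setOf_isLeftInversion u), ← hw₀inv,
    ncard_setOf_isLeftInversion, ncard_setOf_isLeftInversion] at hcard
  have := hw₀ u
  omega

theorem exists_wordProd_eraseIdx_eq_mul (ω : List B) {t : W}
    (h : cs.IsRightInversion (π ω) t) : ∃ j, π (ω.eraseIdx j) = π ω * t := by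
  classical
  have hleft : cs.IsLeftInversion (π ω) (π ω * t * (π ω)⁻¹) :=
    ⟨h.1.conj _, by simpa using h.2⟩
  have hmem := cs.mem_leftInvSeq_of_invParity_ne_zero
    (by rw [cs.invParity_eq_one_iff.mpr hleft]; exact one_ne_zero)
  obtain ⟨j, hj, hget⟩ := List.mem_iff_getElem.mp hmem
  refine ⟨j, ?_⟩
  rw [← getD_leftInvSeq_mul_wordProd, List.getD_eq_getElem _ _ hj, hget, inv_mul_cancel_right]

def BruhatStep (u w : W) : Prop := (∃ t, cs.IsReflection t ∧ w = u * t) ∧ ℓ u < ℓ w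

local infix:50 " ≤ᴮ " => Relation.ReflTransGen cs.BruhatStep

theorem bruhatStep_mul_simple {w : W} {i : B} (h : ℓ w < ℓ (w * s i)) :
    cs.BruhatStep w (w * s i) :=
  ⟨⟨s i, cs.isReflection_simple i, rfl⟩, h⟩

theorem length_le_of_bruhat {x y : W} (h : x ≤ᴮ y) : ℓ x ≤ ℓ y := by
  induction h with
  | refl => rfl
  | tail _ hstep ih => exact ih.trans hstep.2.le

theorem exists_sublist_wordProd_eq_of_bruhat {x : W} {ω : List B} (h : x ≤ᴮ π ω) :
    ∃ C, C <+ ω ∧ π C = x := by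
  generalize hy : π ω = y at h
  induction h generalizing ω with
  | refl => exact ⟨ω, .refl _, hy⟩
  | @tail v _ _ hstep ih =>
    obtain ⟨⟨t, ht, rfl⟩, hlt⟩ := hstep
    have hcancel : π ω * t = v := by rw [hy, mul_assoc, ht.mul_self, mul_one]
    obtain ⟨j, hj⟩ := cs.exists_wordProd_eraseIdx_eq_mul ω (t := t) ⟨ht, hcancel ▸ hy ▸ hlt⟩
    obtain ⟨C, hC, rfl⟩ := ih (hj.trans hcancel)
    exact ⟨C, hC.trans (List.eraseIdx_sublist _ _), rfl⟩

theorem exists_sublist_wordProd_eq_mul_simple {C R : List B} {i : B} (hC : C <+ R ++ [i]) :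
    ∃ C', C' <+ R ++ [i] ∧ π C' = π C * s i := by
  obtain ⟨C₁, C₂, rfl, hC₁, hC₂⟩ := List.sublist_append_iff.mp hC
  rcases List.sublist_singleton.mp hC₂ with rfl | rfl
  · exact ⟨C₁ ++ [i], hC₁.append (.refl _), by simp [wordProd_append]⟩
  · exact ⟨C₁, hC₁.trans (List.sublist_append_left _ _), by simp [wordProd_append]⟩

/-- The lifting property of Bruhat order at `w`. -/
def LiftingAt (w : W) : Prop :=
  ∀ ⦃x : W⦄ (i : B), x ≤ᴮ w →
    (ℓ w < ℓ (w * s i) → x * s i ≤ᴮ w * s i) ∧ (ℓ (w * s i) < ℓ w → x * s i ≤ᴮ w)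

theorem bruhat_wordProd_of_sublist {n : ℕ} (hlift : ∀ w, ℓ w < n → cs.LiftingAt w)
    {R : List B} (hR : cs.IsReduced R) (hn : R.length ≤ n) {A : List B} (hA : A <+ R) :
    π A ≤ᴮ π R := by
  induction R using List.reverseRecOn generalizing A with
  | nil => rw [List.sublist_nil.mp hA]
  | append_singleton R j ih =>
    have hR₀ : cs.IsReduced R := by simpa using hR.take R.length
    have hRlen : R.length + 1 ≤ n := by simpa using hn
    have hup : ℓ (π R) < ℓ (π R * s j) := by
      have hRj := hR
      rw [IsReduced, wordProd_append, wordProd_singleton, List.length_append] at hRj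
      rw [hRj, hR₀]
      simp
    obtain ⟨A₁, A₂, rfl, hA₁, hA₂⟩ := List.sublist_append_iff.mp hA
    have hbelow := ih hR₀ (by omega) hA₁
    rw [cs.wordProd_append R, wordProd_singleton]
    rcases List.sublist_singleton.mp hA₂ with rfl | rfl
    · simpa using hbelow.tail (cs.bruhatStep_mul_simple hup)
    · simpa [wordProd_append] using (hlift _ (by rw [hR₀]; omega) j hbelow).1 hup

theorem bruhat_mul_simple_of_lt {w : W} (hlift : ∀ v, ℓ v < ℓ w → cs.LiftingAt v) {x : W}
    {i : B} (hx : x ≤ᴮ w) (hw : ℓ w < ℓ (w * s i)) : x * s i ≤ᴮ w * s i := by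
  -- Lift along the last step `v → v t` of the chain: `v s → v s (s t s) = w s` if `v < v s`,
  -- and `v → w → w s` otherwise.
  rcases hx.cases_tail with rfl | ⟨v, hxv, ⟨t, ht, rfl⟩, hvt⟩
  · rfl
  rcases cs.length_mul_simple v i with hup | hdown
  · have hconj : cs.IsReflection (s i * t * s i) := by simpa using ht.conj (s i)
    exact ((hlift v hvt i hxv).1 (by omega)).tail
      ⟨⟨s i * t * s i, hconj, by simp [mul_assoc]⟩, by omega⟩
  · exact (((hlift v hvt i hxv).2 (by omega)).tail ⟨⟨t, ht, rfl⟩, hvt⟩).tail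
      (cs.bruhatStep_mul_simple hw)

theorem bruhat_of_mul_simple_lt {w : W} (hlift : ∀ v, ℓ v < ℓ w → cs.LiftingAt v) {x : W}
    {i : B} (hx : x ≤ᴮ w) (hw : ℓ (w * s i) < ℓ w) : x * s i ≤ᴮ w := by
  obtain ⟨R, hR, hRw⟩ := cs.exists_isReduced (w * s i)
  have hRi : π (R ++ [i]) = w := by
    rw [wordProd_append, wordProd_singleton, ← hRw, simple_mul_simple_cancel_right]
  have hlen : R.length + 1 = ℓ w := by
    have hRlen : ℓ (w * s i) = R.length := by rw [hRw]; exact hR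
    rcases cs.length_mul_simple w i with h | h <;> omega
  have hRired : cs.IsReduced (R ++ [i]) := by
    rw [IsReduced, hRi, List.length_append, List.length_singleton, hlen]
  obtain ⟨C, hC, rfl⟩ := cs.exists_sublist_wordProd_eq_of_bruhat (hRi ▸ hx)
  obtain ⟨C', hC', hC'eq⟩ := exists_sublist_wordProd_eq_mul_simple cs hC
  rw [← hC'eq, ← hRi]
  exact cs.bruhat_wordProd_of_sublist hlift hRired (by simp [hlen]) hC'

theorem liftingAt (w : W) : cs.LiftingAt w := by
  induction hn : ℓ w using Nat.strong_induction_on generalizing w with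
  | _ n ih =>
    have hlift : ∀ v, ℓ v < ℓ w → cs.LiftingAt v := fun v hv => ih _ (hn ▸ hv) v rfl
    exact fun x i hx => ⟨cs.bruhat_mul_simple_of_lt hlift hx, cs.bruhat_of_mul_simple_lt hlift hx⟩

theorem dem_append_singleton (ω : List B) (i : B) :
    Dem cs (ω ++ [i]) =
      if ℓ (Dem cs ω) < ℓ (Dem cs ω * s i) then Dem cs ω * s i else Dem cs ω := by
  rw [Dem, List.foldl_append]
  rfl

theorem bruhat_dem_of_sublist {ω A : List B} (hA : A <+ ω) : π A ≤ᴮ Dem cs ω := by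
  induction ω using List.reverseRecOn generalizing A with
  | nil => rw [List.sublist_nil.mp hA]; rfl
  | append_singleton ω i ih =>
    obtain ⟨A₁, A₂, rfl, hA₁, hA₂⟩ := List.sublist_append_iff.mp hA
    have hD := ih hA₁
    rw [dem_append_singleton]
    split_ifs with hup
    · rcases List.sublist_singleton.mp hA₂ with rfl | rfl
      · simpa using hD.tail (cs.bruhatStep_mul_simple hup)
      · simpa [wordProd_append] using (cs.liftingAt _ i hD).1 hup
    · have hdown : ℓ (Dem cs ω * s i) < ℓ (Dem cs ω) :=
        (not_lt.mp hup).lt_of_ne (cs.length_mul_simple_ne _ i)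
      rcases List.sublist_singleton.mp hA₂ with rfl | rfl
      · simpa using hD
      · simpa [wordProd_append] using (cs.liftingAt _ i hD).2 hdown

theorem length_wordProd_le_length_dem {ω A : List B} (hA : A <+ ω) :
    ℓ (π A) ≤ ℓ (Dem cs ω) :=
  cs.length_le_of_bruhat (cs.bruhat_dem_of_sublist hA)

end CoxeterSystem

section SubwordComplex

variable {α : Type*}

def subwordDelFrom (n : ℕ) (Q : List α) (I : Finset ℕ) : List α :=
  ((Q.zipIdx n).filter (fun p => p.2 ∉ I)).map Prod.fst

theorem subwordDelFrom_sublist (n : ℕ) (Q : List α) (I : Finset ℕ) :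
    subwordDelFrom n Q I <+ Q := by
  have := (List.filter_sublist (p := fun p : α × ℕ => p.2 ∉ I) (l := Q.zipIdx n)).map Prod.fst
  rwa [List.zipIdx_map_fst] at this

theorem subwordDel_sublist (Q : List α) (I : Finset ℕ) : subwordDel Q I <+ Q :=
  subwordDelFrom_sublist 1 Q I

theorem subwordDel_append (Q P : List α) (I : Finset ℕ) :
    subwordDel (Q ++ P) I = subwordDel Q I ++ subwordDelFrom (1 + Q.length) P I := by
  simp [subwordDel, subwordDelFrom, List.zipIdx_append]

theorem subwordDelFrom_eq_self_iff {n : ℕ} {P : List α} {I : Finset ℕ} :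
    subwordDelFrom n P I = P ↔ ∀ k ∈ I, k < n ∨ n + P.length ≤ k := by
  have hfilter : subwordDelFrom n P I = P ↔
      (P.zipIdx n).filter (fun p => p.2 ∉ I) = P.zipIdx n := by
    refine ⟨fun h => List.filter_sublist.eq_of_length ?_,
      fun h => by rw [subwordDelFrom, h, List.zipIdx_map_fst]⟩
    simpa [subwordDelFrom] using congrArg List.length h
  have hpos : ∀ k, k ∈ (P.zipIdx n).map Prod.snd ↔ n ≤ k ∧ k < n + P.length := fun k => by
    rw [List.zipIdx_map_snd, List.mem_range'_1]
  rw [hfilter, List.filter_eq_self]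
  constructor
  · intro h k hk
    by_contra hnot
    obtain ⟨a, ha, rfl⟩ := List.mem_map.mp ((hpos k).mpr (by omega))
    simpa [hk] using h a ha
  · intro h a ha
    have hrange := (hpos a.2).mp (List.mem_map_of_mem ha)
    simp only [decide_eq_true_eq]
    exact fun hk => by have := h _ hk; omega

variable {B W : Type*} [Group W] {M : CoxeterMatrix B} (cs : CoxeterSystem M W)

theorem IsSCFacet.append {Q P : List B} {u : W} {I : Finset ℕ} (hI : IsSCFacet cs Q u I)
    (hlen : cs.length (u * cs.wordProd P) = cs.length u + P.length) :
    IsSCFacet cs (Q ++ P) (u * cs.wordProd P) I := by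
  obtain ⟨hIQ, hred, hprod⟩ := hI
  have hdel : subwordDel (Q ++ P) I = subwordDel Q I ++ P := by
    rw [subwordDel_append, subwordDelFrom_eq_self_iff.mpr fun k hk => .inl ?_]
    have := Finset.mem_Icc.mp (hIQ hk)
    omega
  refine ⟨hIQ.trans (Finset.Icc_subset_Icc le_rfl (by simp)), ?_, ?_⟩
  · rw [CoxeterSystem.IsReduced, hdel, cs.wordProd_append, hprod, hlen, List.length_append,
      ← hred, hprod]
  · rw [hdel, cs.wordProd_append, hprod]

theorem IsSCFacet.of_append {Q P : List B} {w : W} {I : Finset ℕ}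
    (hI : IsSCFacet cs (Q ++ P) w I) (hlen : cs.length (Dem cs Q) + P.length ≤ cs.length w) :
    IsSCFacet cs Q (w * (cs.wordProd P)⁻¹) I := by
  obtain ⟨hIQP, hred, hprod⟩ := hI
  set A := subwordDel Q I
  set P' := subwordDelFrom (1 + Q.length) P I
  have hdel : subwordDel (Q ++ P) I = A ++ P' := subwordDel_append Q P I
  have hA : cs.length (cs.wordProd A) ≤ cs.length (Dem cs Q) :=
    cs.length_wordProd_le_length_dem (subwordDel_sublist Q I)
  have hsum : A.length + P'.length = cs.length w := by
    rw [← hprod, hred, hdel, List.length_append]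
  have htri : cs.length w ≤ cs.length (cs.wordProd A) + P'.length := by
    rw [← hprod, hdel, cs.wordProd_append]
    exact (cs.length_mul_le _ _).trans (Nat.add_le_add_left (cs.length_wordProd_le _) _)
  have hP'sub : P' <+ P := subwordDelFrom_sublist _ P I
  have hP' : P' = P := hP'sub.eq_of_length (by have := hP'sub.length_le; omega)
  refine ⟨fun k hk => ?_, ?_, ?_⟩
  · have h1 := Finset.mem_Icc.mp (hIQP hk)
    have h2 := subwordDelFrom_eq_self_iff.mp hP' k hk
    rw [List.length_append] at h1
    exact Finset.mem_Icc.mpr ⟨h1.1, by omega⟩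
  · show cs.length (cs.wordProd A) = A.length
    have := cs.length_wordProd_le A
    omega
  · rw [eq_mul_inv_iff_mul_eq, ← cs.wordProd_append, ← hP', ← hdel, hprod]

end SubwordComplex

theorem stmt_5_general {B W : Type*} [Group W] {M : CoxeterMatrix B}
    (cs : CoxeterSystem M W) (w0 : W) (hw0 : ∀ w : W, cs.length w ≤ cs.length w0)
    (Q P : List B) (π : W) (hsph : Dem cs Q = π)
    (hP : cs.IsReduced P) (hPprod : cs.wordProd P = π⁻¹ * w0) :
    (∀ I : Finset ℕ, IsSCFacet cs Q π I ↔ IsSCFacet cs (Q ++ P) w0 I) ∧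
    subwordCpx cs Q π = subwordCpx cs (Q ++ P) w0 := by
  have hlen : cs.length π + P.length = cs.length w0 := by
    rw [← hP, hPprod]
    exact cs.length_add_length_inv_mul hw0 π
  have hprod : π * cs.wordProd P = w0 := by rw [hPprod, mul_inv_cancel_left]
  have hfacet (I : Finset ℕ) : IsSCFacet cs Q π I ↔ IsSCFacet cs (Q ++ P) w0 I := by
    refine ⟨fun h => hprod ▸ h.append cs (by rw [hprod, hlen]), fun h => ?_⟩
    simpa [← hprod] using h.of_append cs (by rw [hsph, hlen])
  refine ⟨hfacet, Set.ext fun J => ?_⟩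
  simp only [subwordCpx, Set.mem_ofPred_eq, hfacet]

/-- for a finite Coxeter system with longest element `w₀`, a spherical
subword complex `SC(Q, π)` (i.e. `Dem(Q) = π`), and `Q' = Q ++ P` where `P` is a reduced
word for `π⁻¹w₀`, the facets of `SC(Q', w₀)` coincide with the facets of `SC(Q, π)`;
in particular the two complexes are equal (hence isomorphic). -/
theorem stmt_5 {B W : Type*} [Group W] [Finite W] {M : CoxeterMatrix B}
    (cs : CoxeterSystem M W) (w0 : W) (hw0 : ∀ w : W, cs.length w ≤ cs.length w0)
    (Q P : List B) (π : W) (hsph : Dem cs Q = π)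
    (hP : cs.IsReduced P) (hPprod : cs.wordProd P = π⁻¹ * w0) :
    (∀ I : Finset ℕ, IsSCFacet cs Q π I ↔ IsSCFacet cs (Q ++ P) w0 I) ∧
    subwordCpx cs Q π = subwordCpx cs (Q ++ P) w0 :=
  stmt_5_general cs w0 hw0 Q P π hsph hP hPprod
end

section
/- Let SC(Q, π) be a subword complex with Q = (q₁, q₂, …, q_r), let Q' = (q₂, …, q_r), and suppose {1} is a vertex of SC(Q, π). Then the deletion of vertex 1 from SC(Q, π) is isomorphic to SC(Q', π) if ℓ(q₁π) > ℓ(π), and isomorphic to SC(Q', q₁π) if ℓ(q₁π) < ℓ(π). -/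
/-!
Write `Q = q₁ Q'`. Shifting positions down by one, the facets of `SC(Q, π)` containing `1` are
the facets of `SC(Q', π)`, and those avoiding `1` exist only when `ℓ(q₁π) < ℓ(π)`, where they
are the facets of `SC(Q', q₁π)`. This settles the case `ℓ(q₁π) > ℓ(π)`. When `ℓ(q₁π) < ℓ(π)`,
the exchange property lets one delete one more letter from any reduced word for `π` inside `Q'`
to get one for `q₁π`, so `SC(Q', π) ⊆ SC(Q', q₁π)` and only the second family matters.

The exchange property comes from Tits' cocycle: the permutations
`(t, ε) ↦ (sᵢ t sᵢ, ε + [t = sᵢ])` of `W × ℤ/2` satisfy the Coxeter relations, and the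
resulting cocycle detects reflections in right inversion sequences.
-/

namespace CoxeterSystem

open scoped Classical

variable {B W : Type*} [Group W] {M : CoxeterMatrix B} (cs : CoxeterSystem M W)

local prefix:100 "s" => cs.simple
local prefix:100 "π" => cs.wordProd
local prefix:100 "ℓ" => cs.length

theorem simple_mul_mul_simple_eq_iff (i : B) (t u : W) :
    s i * t * s i = u ↔ t = s i * u * s i := by
  constructor <;> rintro rfl <;> simp [mul_assoc, simple_mul_simple_cancel_left]

noncomputable def simplePerm (i : B) : Equiv.Perm (W × ZMod 2) :=
  Function.Involutive.toPerm (fun x => (s i * x.1 * s i, x.2 + if x.1 = s i then 1 else 0))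
    (by
      rintro ⟨t, ε⟩
      have h : s i * t * s i = s i ↔ t = s i := by
        rw [simple_mul_mul_simple_eq_iff, simple_mul_simple_self, one_mul]
      ext
      · simp [mul_assoc, simple_mul_simple_cancel_left]
      · by_cases ht : t = s i <;> simp [h, ht, add_assoc, CharTwo.add_self_eq_zero])

theorem simplePerm_apply (i : B) (t : W) (ε : ZMod 2) :
    cs.simplePerm i (t, ε) = (s i * t * s i, ε + if t = s i then 1 else 0) := rfl

theorem simplePerm_mul_simplePerm_pow_apply (i j : B) (n : ℕ) (t : W) (ε : ZMod 2) :
    ((cs.simplePerm i * cs.simplePerm j) ^ n) (t, ε) =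
      ((s i * s j) ^ n * t * ((s i * s j) ^ n)⁻¹,
        ε + ∑ l ∈ Finset.range (2 * n), if t = s j * (s i * s j) ^ l then 1 else 0) := by
  have hconj : ∀ u, s i * (s j * u * s j) * s i = s i * s j * u * (s i * s j)⁻¹ := by
    simp [mul_inv_rev, inv_simple, mul_assoc]
  have hp : (s i * s j)⁻¹ * s j = s j * (s i * s j) := by
    simp [mul_inv_rev, inv_simple, mul_assoc]
  have hsi : ∀ u, s j * u * s j = s i ↔ u = s j * (s i * s j) := by
    intro u; rw [simple_mul_mul_simple_eq_iff, mul_assoc]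
  generalize s i * s j = p at hconj hp hsi ⊢
  induction n generalizing t ε with
  | zero => simp
  | succ n ih =>
    have hshift : ∀ l, p * t * p⁻¹ = s j * p ^ l ↔ t = s j * p ^ (l + 2) := by
      intro l
      have h : s j * p ^ (l + 2) = p⁻¹ * (s j * p ^ l) * p := by
        rw [← mul_assoc, hp, pow_add, pow_two]; group
      rw [h]
      constructor
      · intro h; rw [← h]; group
      · rintro rfl; group
    rw [pow_succ, Equiv.Perm.mul_apply, Equiv.Perm.mul_apply, simplePerm_apply,
      simplePerm_apply, hconj, ih]
    ext
    · simp only [pow_succ, mul_inv_rev]; group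
    · simp only [hshift, hsi, mul_add, mul_one, Finset.sum_range_succ', zero_add, pow_zero, pow_one]
      ring

theorem isLiftable_simplePerm : M.IsLiftable cs.simplePerm := by
  intro i j
  ext ⟨t, ε⟩ : 1
  have hpow := cs.simple_mul_simple_pow i j
  have hsum : (∑ l ∈ Finset.range (2 * M i j),
      if t = s j * (s i * s j) ^ l then (1 : ZMod 2) else 0) = 0 := by
    rw [two_mul, Finset.sum_range_add]
    simp only [pow_add, hpow, one_mul, CharTwo.add_self_eq_zero]
  rw [simplePerm_mul_simplePerm_pow_apply, hpow, hsum]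
  simp

noncomputable def reflectionRep : W →* Equiv.Perm (W × ZMod 2) :=
  cs.lift ⟨cs.simplePerm, cs.isLiftable_simplePerm⟩

/-- The parity of the number of occurrences of `t` in the right inversion sequence of any word
for `w`. -/
noncomputable def reflectionCocycle (w t : W) : ZMod 2 := (cs.reflectionRep w (t, 0)).2

theorem reflectionRep_simple (i : B) : cs.reflectionRep (s i) = cs.simplePerm i :=
  cs.lift_apply_simple cs.isLiftable_simplePerm i

theorem reflectionRep_apply (w t : W) (ε : ZMod 2) :
    cs.reflectionRep w (t, ε) = (w * t * w⁻¹, ε + cs.reflectionCocycle w t) := by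
  induction w using cs.simple_induction_left generalizing t ε with
  | one =>
    simp only [reflectionCocycle, map_one, Equiv.Perm.one_apply, one_mul, inv_one, mul_one,
      add_zero]
  | mul_simple_left w i ih =>
    have hη : cs.reflectionCocycle (s i * w) t =
        cs.reflectionCocycle w t + if w * t * w⁻¹ = s i then 1 else 0 := by
      show (cs.reflectionRep (s i * w) (t, 0)).2 = _
      rw [map_mul, Equiv.Perm.mul_apply, ih, reflectionRep_simple, simplePerm_apply, zero_add]
    rw [map_mul, Equiv.Perm.mul_apply, ih, reflectionRep_simple, simplePerm_apply, hη, add_assoc]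
    simp [mul_assoc, inv_simple]

theorem reflectionCocycle_mul (u v t : W) :
    cs.reflectionCocycle (u * v) t =
      cs.reflectionCocycle v t + cs.reflectionCocycle u (v * t * v⁻¹) := by
  show (cs.reflectionRep (u * v) (t, 0)).2 = _
  rw [map_mul, Equiv.Perm.mul_apply, reflectionRep_apply, reflectionRep_apply, zero_add]

theorem reflectionCocycle_simple (i : B) (t : W) :
    cs.reflectionCocycle (s i) t = if t = s i then 1 else 0 := by
  simp [reflectionCocycle, reflectionRep_simple, simplePerm_apply]

theorem mem_rightInvSeq_of_reflectionCocycle_eq_one (ω : List B) (t : W)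
    (h : cs.reflectionCocycle (π ω) t = 1) : t ∈ cs.rightInvSeq ω := by
  induction ω with
  | nil => simp [reflectionCocycle] at h
  | cons i ω ih =>
    rw [wordProd_cons, reflectionCocycle_mul, reflectionCocycle_simple] at h
    rw [rightInvSeq, List.mem_cons]
    by_cases ht : π ω * t * (π ω)⁻¹ = s i
    · left; rw [← ht]; group
    · right; rw [if_neg ht, add_zero] at h; exact ih h

theorem length_mul_lt_of_reflectionCocycle_eq_one {w t : W}
    (h : cs.reflectionCocycle w t = 1) : ℓ (w * t) < ℓ w := by
  obtain ⟨ω, hω, rfl⟩ := cs.exists_isReduced w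
  obtain ⟨j, hj, rfl⟩ := List.getElem_of_mem (cs.mem_rightInvSeq_of_reflectionCocycle_eq_one ω t h)
  rw [length_rightInvSeq] at hj
  rw [← List.getD_eq_getElem _ 1, wordProd_mul_getD_rightInvSeq, hω.eq]
  calc ℓ (π (ω.eraseIdx j)) ≤ (ω.eraseIdx j).length := cs.length_wordProd_le _
    _ < ω.length := by rw [← List.length_eraseIdx_add_one hj]; omega

theorem reflectionCocycle_simple_eq_one {w : W} {i : B} (h : ℓ (w * s i) < ℓ w) :
    cs.reflectionCocycle w (s i) = 1 := by
  by_contra hne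
  have h1 : cs.reflectionCocycle (w * s i) (s i) = 1 := by
    rw [reflectionCocycle_mul, reflectionCocycle_simple, if_pos rfl, inv_simple,
      simple_mul_simple_cancel_right]
    generalize cs.reflectionCocycle w (s i) = a at hne ⊢
    revert a
    decide
  have := cs.length_mul_lt_of_reflectionCocycle_eq_one h1
  rw [simple_mul_simple_cancel_right] at this
  omega

theorem exists_wordProd_eraseIdx_eq_simple_mul (ω : List B) {i : B}
    (h : ℓ (s i * π ω) < ℓ (π ω)) : ∃ j < ω.length, π (ω.eraseIdx j) = s i * π ω := by
  have h' : ℓ (π ω.reverse * s i) < ℓ (π ω.reverse) := by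
    rwa [wordProd_reverse, ← inv_simple, ← mul_inv_rev, length_inv, length_inv]
  have hmem := cs.mem_rightInvSeq_of_reflectionCocycle_eq_one _ _
    (cs.reflectionCocycle_simple_eq_one h')
  rw [rightInvSeq_reverse, List.mem_reverse] at hmem
  obtain ⟨j, hj, hjs⟩ := List.getElem_of_mem hmem
  rw [length_leftInvSeq] at hj
  refine ⟨j, hj, ?_⟩
  rw [← getD_leftInvSeq_mul_wordProd, List.getD_eq_getElem _ _ (by simpa using hj), hjs]

theorem isReduced_cons_and_wordProd_eq_iff (i : B) (ω : List B) (w : W) :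
    cs.IsReduced (i :: ω) ∧ π (i :: ω) = w ↔
      cs.IsReduced ω ∧ π ω = s i * w ∧ ℓ (s i * w) < ℓ w := by
  rw [IsReduced, IsReduced, List.length_cons, wordProd_cons]
  have hle := cs.length_wordProd_le ω
  have hstep := cs.length_simple_mul (π ω) i
  constructor
  · rintro ⟨hred, rfl⟩
    rw [simple_mul_simple_cancel_left]
    exact ⟨by omega, rfl, by omega⟩
  · rintro ⟨hred, hω, hlt⟩
    obtain rfl : w = s i * π ω := by rw [hω, simple_mul_simple_cancel_left]
    rw [simple_mul_simple_cancel_left] at hlt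
    exact ⟨by omega, rfl⟩

end CoxeterSystem

section Subword

variable {C : Type*}

theorem subwordDel_cons (q : C) (Q : List C) {I K : Finset ℕ}
    (hIK : ∀ i, 1 ≤ i → (i + 1 ∈ I ↔ i ∈ K)) :
    subwordDel (q :: Q) I = (if 1 ∈ I then [] else [q]) ++ subwordDel Q K := by
  have htail : (Q.zipIdx (1 + 1)).filter (fun p => p.2 ∉ I) =
      ((Q.zipIdx 1).filter (fun p => p.2 ∉ K)).map (fun p => (p.1, p.2 + 1)) := by
    rw [List.zipIdx_succ, List.filter_map]
    congr 1
    apply List.filter_congr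
    rintro ⟨a, k⟩ hk
    simp [hIK k (List.mem_zipIdx hk).1]
  unfold subwordDel
  rw [List.zipIdx_cons, List.filter_cons, htail]
  split_ifs <;> simp_all [List.map_map, Function.comp_def]

theorem subwordDel_cons_insert_one (q : C) (Q : List C) (K : Finset ℕ) :
    subwordDel (q :: Q) (insert 1 (K.image (· + 1))) = subwordDel Q K := by
  rw [subwordDel_cons q Q (K := K), if_pos (Finset.mem_insert_self _ _), List.nil_append]
  intro i hi
  simp only [Finset.mem_insert, Nat.add_eq_right, Finset.mem_image, Nat.add_right_cancel_iff,
    exists_eq_right, or_iff_right_iff_imp]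
  omega

theorem subwordDel_cons_image_add_one (q : C) (Q : List C) {K : Finset ℕ} (hK : 0 ∉ K) :
    subwordDel (q :: Q) (K.image (· + 1)) = q :: subwordDel Q K := by
  rw [subwordDel_cons q Q (K := K), if_neg (by simpa using hK)]
  · rfl
  · intro i hi
    simp

theorem exists_subwordDel_insert_eq_eraseIdx (Q : List C) (S : Finset ℕ) {k : ℕ}
    (hk : k < (subwordDel Q S).length) :
    ∃ m ∈ Finset.Icc 1 Q.length, subwordDel Q (insert m S) = (subwordDel Q S).eraseIdx k := by
  classical
  set L := (Q.zipIdx 1).filter (fun p => p.2 ∉ S)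
  have hkL : k < L.length := by rwa [subwordDel, List.length_map] at hk
  have hnodup : L.Nodup := List.filter_sublist.nodup
    (List.Nodup.of_map Prod.snd (by rw [List.zipIdx_map_snd]; exact List.nodup_range'))
  have hx := List.mem_zipIdx (x := L[k].1) (i := L[k].2)
    (List.mem_filter.1 (List.getElem_mem hkL)).1
  refine ⟨L[k].2, Finset.mem_Icc.2 (by omega), ?_⟩
  have hfilter : (Q.zipIdx 1).filter (fun p => p.2 ∉ insert L[k].2 S) = L.filter (· != L[k]) := by
    rw [List.filter_filter]
    apply List.filter_congr
    rintro ⟨a, i⟩ hy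
    have hy := List.mem_zipIdx hy
    have key : i = L[k].2 ↔ (a, i) = L[k] := by
      constructor
      · intro h; ext <;> simp_all
      · rintro h; rw [← h]
    by_cases hi : i = L[k].2 <;> simp_all
  rw [subwordDel, hfilter, ← hnodup.erase_eq_filter, hnodup.erase_getElem, subwordDel,
    List.eraseIdx_map]

end Subword

section SubwordComplex

variable {B W : Type*} [Group W] {M : CoxeterMatrix B} {cs : CoxeterSystem M W}

theorem image_add_one_subset_Icc_iff {K : Finset ℕ} (hK : 0 ∉ K) (n : ℕ) :
    K.image (· + 1) ⊆ Finset.Icc 1 (n + 1) ↔ K ⊆ Finset.Icc 1 n := by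
  simp only [Finset.subset_iff, Finset.mem_image, Finset.mem_Icc, forall_exists_index, and_imp,
    forall_apply_eq_imp_iff₂]
  refine forall₂_congr fun i hi => ?_
  have : i ≠ 0 := fun h => hK (h ▸ hi)
  omega

theorem image_sub_one_image_add_one {J : Finset ℕ} (hJ : 0 ∉ J) :
    (J.image (· - 1)).image (· + 1) = J := by
  rw [Finset.image_image]
  refine (Finset.image_congr fun i hi => ?_).trans Finset.image_id
  have : i ≠ 0 := fun h => hJ (h ▸ hi)
  simp only [Function.comp_apply, id]
  omega

theorem IsSCFacet.zero_notMem {Q : List B} {w : W} {F : Finset ℕ} (hF : IsSCFacet cs Q w F) :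
    0 ∉ F := fun h => by simpa using hF.1 h

theorem isSCFacet_cons_insert_one_iff {q : B} {Q : List B} {w : W} {K : Finset ℕ} (hK : 0 ∉ K) :
    IsSCFacet cs (q :: Q) w (insert 1 (K.image (· + 1))) ↔ IsSCFacet cs Q w K := by
  rw [IsSCFacet, IsSCFacet, subwordDel_cons_insert_one, Finset.insert_subset_iff,
    List.length_cons, image_add_one_subset_Icc_iff hK]
  simp

theorem isSCFacet_cons_image_add_one_iff {q : B} {Q : List B} {w : W} {K : Finset ℕ}
    (hK : 0 ∉ K) :
    IsSCFacet cs (q :: Q) w (K.image (· + 1)) ↔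
      IsSCFacet cs Q (cs.simple q * w) K ∧ cs.length (cs.simple q * w) < cs.length w := by
  rw [IsSCFacet, IsSCFacet, subwordDel_cons_image_add_one q Q hK, List.length_cons,
    image_add_one_subset_Icc_iff hK, cs.isReduced_cons_and_wordProd_eq_iff]
  tauto

theorem IsSCFacet.exists_superset_of_length_simple_mul_lt {q : B} {Q : List B} {w : W}
    {F : Finset ℕ} (hF : IsSCFacet cs Q w F) (h : cs.length (cs.simple q * w) < cs.length w) :
    ∃ F', F ⊆ F' ∧ IsSCFacet cs Q (cs.simple q * w) F' := by
  obtain ⟨hFQ, hred, rfl⟩ := hF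
  obtain ⟨j, hj, hdel⟩ := cs.exists_wordProd_eraseIdx_eq_simple_mul _ h
  obtain ⟨m, hm, heq⟩ := exists_subwordDel_insert_eq_eraseIdx Q F hj
  refine ⟨insert m F, Finset.subset_insert m F, Finset.insert_subset hm hFQ, ?_, by rw [heq, hdel]⟩
  rw [CoxeterSystem.IsReduced, heq, hdel]
  have := List.length_eraseIdx_add_one hj
  have := cs.length_simple_mul (cs.wordProd (subwordDel Q F)) q
  rw [hred.eq] at this h
  omega

theorem subwordCpx_subset_of_length_simple_mul_lt {q : B} {Q : List B} {w : W}
    (h : cs.length (cs.simple q * w) < cs.length w) :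
    subwordCpx cs Q w ⊆ subwordCpx cs Q (cs.simple q * w) := by
  rintro J ⟨F, hF, hJF⟩
  obtain ⟨F', hFF', hF'⟩ := hF.exists_superset_of_length_simple_mul_lt h
  exact ⟨F', hF', hJF.trans hFF'⟩

theorem mem_subwordCpx_cons_and_one_notMem_iff {q : B} {Q : List B} {w : W} (J : Finset ℕ) :
    J ∈ subwordCpx cs (q :: Q) w ∧ 1 ∉ J ↔
      ∃ K, (K ∈ subwordCpx cs Q w ∨
          (cs.length (cs.simple q * w) < cs.length w ∧ K ∈ subwordCpx cs Q (cs.simple q * w))) ∧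
        J = K.image (· + 1) := by
  constructor
  · rintro ⟨⟨I, hI, hJI⟩, hJ1⟩
    set L := (I.erase 1).image (· - 1)
    have hL0 : 0 ∉ L := by
      simp only [L, Finset.mem_image, Finset.mem_erase, not_exists, not_and]
      rintro i ⟨hi1, hi⟩ hi0
      exact hI.zero_notMem (by rwa [show i = 0 by omega] at hi)
    have hL : L.image (· + 1) = I.erase 1 :=
      image_sub_one_image_add_one (fun h => hI.zero_notMem (Finset.mem_of_mem_erase h))
    obtain ⟨K, hKL, rfl⟩ := Finset.subset_image_iff.1 (hL ▸ Finset.subset_erase.2 ⟨hJI, hJ1⟩)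
    refine ⟨K, ?_, rfl⟩
    by_cases h1 : 1 ∈ I
    · rw [← Finset.insert_erase h1, ← hL, isSCFacet_cons_insert_one_iff hL0] at hI
      exact Or.inl ⟨L, hI, hKL⟩
    · rw [← Finset.erase_eq_of_notMem h1, ← hL, isSCFacet_cons_image_add_one_iff hL0] at hI
      exact Or.inr ⟨hI.2, L, hI.1, hKL⟩
  · rintro ⟨K, ⟨F, hF, hKF⟩ | ⟨h, F, hF, hKF⟩, rfl⟩
    · refine ⟨⟨_, (isSCFacet_cons_insert_one_iff hF.zero_notMem).2 hF,
        (Finset.image_subset_image hKF).trans (Finset.subset_insert _ _)⟩, ?_⟩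
      simpa using fun h => hF.zero_notMem (hKF h)
    · refine ⟨⟨_, (isSCFacet_cons_image_add_one_iff hF.zero_notMem).2 ⟨hF, h⟩,
        Finset.image_subset_image hKF⟩, ?_⟩
      simpa using fun h => hF.zero_notMem (hKF h)

end SubwordComplex

theorem stmt_7_general {B W : Type*} [Group W] {M : CoxeterMatrix B} (cs : CoxeterSystem M W)
    (q1 : B) (Q' : List B) (π : W) :
    (cs.length π < cs.length (cs.simple q1 * π) →
      ∀ J : Finset ℕ, (J ∈ subwordCpx cs (q1 :: Q') π ∧ 1 ∉ J) ↔
        ∃ K ∈ subwordCpx cs Q' π, J = K.image (· + 1)) ∧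
    (cs.length (cs.simple q1 * π) < cs.length π →
      ∀ J : Finset ℕ, (J ∈ subwordCpx cs (q1 :: Q') π ∧ 1 ∉ J) ↔
        ∃ K ∈ subwordCpx cs Q' (cs.simple q1 * π), J = K.image (· + 1)) := by
  refine ⟨fun hasc J => ?_, fun hdesc J => ?_⟩
  · simp only [mem_subwordCpx_cons_and_one_notMem_iff, hasc.not_gt, false_and, or_false]
  · simp only [mem_subwordCpx_cons_and_one_notMem_iff, hdesc, true_and]
    exact exists_congr fun K => and_congr_left'
      (or_iff_right_of_imp (subwordCpx_subset_of_length_simple_mul_lt hdesc ·))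

/-- if `{1}` is a vertex of `SC(Q, π)` with `Q = q₁ :: Q'`, then the
deletion of vertex `1` from `SC(Q, π)` is isomorphic (via shifting positions by one) to
`SC(Q', π)` if `ℓ(q₁π) > ℓ(π)`, and to `SC(Q', q₁π)` if `ℓ(q₁π) < ℓ(π)`. -/
theorem stmt_7 {B W : Type*} [Group W] {M : CoxeterMatrix B} (cs : CoxeterSystem M W)
    (q1 : B) (Q' : List B) (π : W)
    (hv : ({1} : Finset ℕ) ∈ subwordCpx cs (q1 :: Q') π) :
    (cs.length π < cs.length (cs.simple q1 * π) →
      ∀ J : Finset ℕ, (J ∈ subwordCpx cs (q1 :: Q') π ∧ 1 ∉ J) ↔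
        ∃ K ∈ subwordCpx cs Q' π, J = K.image (· + 1)) ∧
    (cs.length (cs.simple q1 * π) < cs.length π →
      ∀ J : Finset ℕ, (J ∈ subwordCpx cs (q1 :: Q') π ∧ 1 ∉ J) ↔
        ∃ K ∈ subwordCpx cs Q' (cs.simple q1 * π), J = K.image (· + 1)) :=
  stmt_7_general cs q1 Q' π
end

section
/- Let SC(Q, π) be a spherical subword complex, I a face with |I| ≥ 2, and i ∈ I. Then the link of the vertex i in the costar of I in SC(Q, π) equals the costar of I \ {i} in the subword complex SC(Q \ q_i, π), where Q \ q_i is Q with the letter at position i deleted (faces identified as subsets of positions other than i). -/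
/-!
Renumbering positions by `j ↦ j` for `j < i` and `j ↦ j - 1` for `j > i` turns "delete the
positions of `F ∋ i` from `Q`" into "delete the renumbered positions of `F \ {i}` from `Q \ q_i`".
Hence `F ↦ F \ {i}` is a bijection from the facets of `SC(Q, π)` containing `i` onto the facets
of `SC(Q \ q_i, π)`, and for such `F` it reflects inclusions `A ⊆ F`. Both the link condition
`insert i J ⊆ F` and the costar condition `¬ I ⊆ F` are inclusions of this kind.
-/

namespace SubwordComplex

/-- The position in `Q` of position `j` of `Q` with its `i`-th letter deleted. -/
def succAbove (i j : ℕ) : ℕ := if j < i then j else j + 1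

def predAbove (i j : ℕ) : ℕ := if j < i then j else j - 1

lemma predAbove_succAbove (i j : ℕ) : predAbove i (succAbove i j) = j := by
  unfold predAbove succAbove; split_ifs <;> omega

lemma succAbove_predAbove {i j : ℕ} (h : j ≠ i) : succAbove i (predAbove i j) = j := by
  unfold predAbove succAbove; split_ifs <;> omega

lemma succAbove_ne (i j : ℕ) : succAbove i j ≠ i := by
  unfold succAbove; split_ifs <;> omega

lemma succAbove_injective (i : ℕ) : Function.Injective (succAbove i) :=
  Function.LeftInverse.injective (predAbove_succAbove i)

/-- The face `A` of `SC(Q, π)` seen as a face of `SC(Q \ q_i, π)`. -/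
def contractAt (i : ℕ) (A : Finset ℕ) : Finset ℕ := (A.erase i).image (predAbove i)

lemma mem_contractAt {i p : ℕ} {A : Finset ℕ} : p ∈ contractAt i A ↔ succAbove i p ∈ A := by
  constructor
  · intro hp
    obtain ⟨j, hj, rfl⟩ := Finset.mem_image.1 hp
    rw [Finset.mem_erase] at hj
    rw [succAbove_predAbove hj.1]
    exact hj.2
  · intro hp
    exact Finset.mem_image.2
      ⟨_, Finset.mem_erase.2 ⟨succAbove_ne i p, hp⟩, predAbove_succAbove i p⟩

lemma contractAt_insert {i : ℕ} {J : Finset ℕ} (hi : i ∉ J) :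
    contractAt i (insert i J) = J.image (predAbove i) := by
  rw [contractAt, Finset.erase_insert hi]

lemma contractAt_insert_image_succAbove (i : ℕ) (F : Finset ℕ) :
    contractAt i (insert i (F.image (succAbove i))) = F := by
  ext p
  simp [mem_contractAt, succAbove_ne, (succAbove_injective i).eq_iff]

lemma subset_iff_contractAt_subset {i : ℕ} {A F : Finset ℕ} (hi : i ∈ F) :
    A ⊆ F ↔ contractAt i A ⊆ contractAt i F := by
  refine ⟨fun h => Finset.image_subset_image (Finset.erase_subset_erase i h), fun h a ha => ?_⟩
  by_cases hai : a = i
  · exact hai ▸ hi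
  · have : predAbove i a ∈ contractAt i F :=
      h (Finset.mem_image_of_mem _ (Finset.mem_erase.2 ⟨hai, ha⟩))
    rwa [mem_contractAt, succAbove_predAbove hai] at this

lemma contractAt_Icc {i n : ℕ} (hi : i ∈ Finset.Icc 1 n) :
    contractAt i (Finset.Icc 1 n) = Finset.Icc 1 (n - 1) := by
  rw [Finset.mem_Icc] at hi
  ext p
  simp only [mem_contractAt, Finset.mem_Icc, succAbove]
  split_ifs <;> omega

lemma subwordDel_eq_subwordDel_eraseIdx {B : Type*} (Q : List B) {F : Finset ℕ} {i : ℕ}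
    (hi : i ∈ Finset.Icc 1 Q.length) (hiF : i ∈ F) :
    subwordDel Q F = subwordDel (Q.eraseIdx (i - 1)) (contractAt i F) := by
  rw [Finset.mem_Icc] at hi
  set L := Q.take (i - 1)
  set R := Q.drop i
  have hL : L.length = i - 1 := by rw [List.length_take]; omega
  have hQ : Q = L ++ Q[i - 1] :: R := by
    have hdrop : Q.drop (i - 1) = Q[i - 1] :: R := by
      rw [List.drop_eq_getElem_cons (by omega), show i - 1 + 1 = i by omega]
    rw [← hdrop, List.take_append_drop]
  have hQ' : Q.eraseIdx (i - 1) = L ++ R := by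
    rw [List.eraseIdx_eq_take_drop_succ, show i - 1 + 1 = i by omega]
  have hlow : (L.zipIdx 1).filter (fun p => p.2 ∉ F) =
      (L.zipIdx 1).filter (fun p => p.2 ∉ contractAt i F) := by
    refine List.filter_congr fun ⟨x, k⟩ hk => ?_
    have := (List.mem_zipIdx hk).2.1
    simp [mem_contractAt, succAbove, show k < i by omega]
  have hhigh : ((R.zipIdx (i + 1)).filter (fun p => p.2 ∉ F)).map Prod.fst =
      ((R.zipIdx i).filter (fun p => p.2 ∉ contractAt i F)).map Prod.fst := by
    rw [List.zipIdx_succ, List.filter_map, List.map_map]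
    refine congrArg (List.map _) (List.filter_congr fun ⟨x, k⟩ hk => ?_)
    have := (List.mem_zipIdx hk).1
    simp [mem_contractAt, succAbove, show ¬ k < i by omega]
  rw [hQ', subwordDel, subwordDel]
  conv_lhs => rw [hQ]
  rw [List.zipIdx_append, List.zipIdx_append, List.zipIdx_cons, hL, show 1 + (i - 1) = i by omega,
    List.filter_append, List.filter_append, List.filter_cons_of_neg (by simpa using hiF),
    List.map_append, List.map_append, hlow, hhigh]

lemma isSCFacet_iff_contractAt {B W : Type*} [Group W] {M : CoxeterMatrix B}
    (cs : CoxeterSystem M W) {Q : List B} {π : W} {F : Finset ℕ} {i : ℕ}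
    (hi : i ∈ Finset.Icc 1 Q.length) (hiF : i ∈ F) :
    IsSCFacet cs Q π F ↔ IsSCFacet cs (Q.eraseIdx (i - 1)) π (contractAt i F) := by
  have hlen : (Q.eraseIdx (i - 1)).length = Q.length - 1 := by
    rw [List.length_eraseIdx, if_pos (by rw [Finset.mem_Icc] at hi; omega)]
  rw [IsSCFacet, IsSCFacet, subset_iff_contractAt_subset hi, contractAt_Icc hi, hlen,
    subwordDel_eq_subwordDel_eraseIdx Q hi hiF]

lemma exists_isSCFacet_mem_iff {B W : Type*} [Group W] {M : CoxeterMatrix B}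
    (cs : CoxeterSystem M W) {Q : List B} {π : W} {i : ℕ} (hi : i ∈ Finset.Icc 1 Q.length)
    (P : Finset ℕ → Prop) :
    (∃ F, IsSCFacet cs Q π F ∧ i ∈ F ∧ P (contractAt i F)) ↔
      ∃ F', IsSCFacet cs (Q.eraseIdx (i - 1)) π F' ∧ P F' := by
  constructor
  · rintro ⟨F, hF, hiF, hP⟩
    exact ⟨_, (isSCFacet_iff_contractAt cs hi hiF).1 hF, hP⟩
  · rintro ⟨F', hF', hP⟩
    have hiF : i ∈ insert i (F'.image (succAbove i)) := Finset.mem_insert_self _ _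
    refine ⟨_, (isSCFacet_iff_contractAt cs hi hiF).2 ?_, hiF, ?_⟩ <;>
      rwa [contractAt_insert_image_succAbove]

end SubwordComplex

open SubwordComplex in
theorem stmt_10_general {B W : Type*} [Group W] {M : CoxeterMatrix B} (cs : CoxeterSystem M W)
    (Q : List B) (π : W) (I : Finset ℕ)
    (hI : I ∈ subwordCpx cs Q π) (i : ℕ) (hi : i ∈ I) :
    ∀ J : Finset ℕ, i ∉ J →
      (insert i J ∈ subwordCostar cs Q π I ↔
        J.image (fun j => if j < i then j else j - 1) ∈
          subwordCostar cs (Q.eraseIdx (i - 1)) π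
            ((I.erase i).image (fun j => if j < i then j else j - 1))) := by
  intro J hiJ
  obtain ⟨F₀, hF₀, hIF₀⟩ := hI
  have hiQ : i ∈ Finset.Icc 1 Q.length := hF₀.1 (hIF₀ hi)
  change _ ↔ ∃ F', _ ∧ J.image (predAbove i) ⊆ F' ∧ ¬ contractAt i I ⊆ F'
  rw [← contractAt_insert hiJ, ← exists_isSCFacet_mem_iff cs hiQ]
  refine exists_congr fun F => ⟨?_, ?_⟩
  · rintro ⟨hF, hJF, hIF⟩
    have hiF : i ∈ F := hJF (Finset.mem_insert_self i J)
    rw [subset_iff_contractAt_subset hiF] at hJF hIF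
    exact ⟨hF, hiF, hJF, hIF⟩
  · rintro ⟨hF, hiF, hJF, hIF⟩
    rw [← subset_iff_contractAt_subset hiF] at hJF hIF
    exact ⟨hF, hJF, hIF⟩

/-- for a spherical subword complex, a face `I` with `|I| ≥ 2` and `i ∈ I`,
the link of the vertex `i` in the costar of `I` equals the costar of `I \ {i}` in
`SC(Q \ qᵢ, π)`, where positions `j ≠ i` of `Q` are identified with positions of
`Q \ qᵢ` via `j ↦ j` for `j < i` and `j ↦ j - 1` for `j > i`. -/
theorem stmt_10 {B W : Type*} [Group W] {M : CoxeterMatrix B} (cs : CoxeterSystem M W)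
    (Q : List B) (π : W) (hsph : Dem cs Q = π) (I : Finset ℕ)
    (hI : I ∈ subwordCpx cs Q π) (hcard : 2 ≤ I.card) (i : ℕ) (hi : i ∈ I) :
    ∀ J : Finset ℕ, i ∉ J →
      (insert i J ∈ subwordCostar cs Q π I ↔
        J.image (fun j => if j < i then j else j - 1) ∈
          subwordCostar cs (Q.eraseIdx (i - 1)) π
            ((I.erase i).image (fun j => if j < i then j else j - 1))) :=
  stmt_10_general cs Q π I hI i hi
end
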